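/- Let 0 < q < 1/2, p = 1 - q, s = 4pq. For every real z > 1: √(z/(z+1/2)) · s^z/√(πz) ≤ I_s(z, 1/2) ≤ (1/√(1-s)) · s^z/√(πz). -/

import Mathlib

/-!
On `[0, s]` with `s < 1` and `b ≤ 1`, the factor `(1 - t) ^ (b - 1)` lies between `1` and
`(1 - s) ^ (b - 1)`, so the incomplete beta integral lies between `s ^ a / a` and
`s ^ a / a * (1 - s) ^ (b - 1)`. For `b = 1/2` the remaining prefactor is
`Γ(z + 1/2) / (Γ(z) √π)`, and Wendel's inequality `Γ(x + a) ≤ x ^ a Γ(x)` (log-convexity of `Γ`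
between `x` and `x + 1`), applied at `x = z` and at `x = z + 1/2`, squeezes the ratio
`Γ(z + 1/2) / Γ(z)` between `z / √(z + 1/2)` and `√z`.
-/

open Real

/-- Regularized incomplete beta function. -/
noncomputable def regIncBeta (x a b : ℝ) : ℝ :=
  (Real.Gamma (a + b) / (Real.Gamma a * Real.Gamma b)) *
    ∫ t in (0:ℝ)..x, t ^ (a - 1) * (1 - t) ^ (b - 1)

theorem Real.Gamma_add_le_rpow_mul_Gamma {x a : ℝ} (hx : 0 < x) (ha₀ : 0 ≤ a) (ha₁ : a ≤ 1) :
    Gamma (x + a) ≤ x ^ a * Gamma x := by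
  rcases ha₀.eq_or_lt with rfl | ha₀
  · simp
  rcases ha₁.eq_or_lt with rfl | ha₁
  · rw [rpow_one, Gamma_add_one hx.ne']
  have h := Gamma_mul_add_mul_le_rpow_Gamma_mul_rpow_Gamma (a := 1 - a) (b := a)
    hx (by linarith : 0 < x + 1) (by linarith) ha₀ (by ring)
  rwa [show (1 - a) * x + a * (x + 1) = x + a by ring, Gamma_add_one hx.ne',
    mul_rpow hx.le (Gamma_pos_of_pos hx).le, mul_left_comm, ← rpow_add (Gamma_pos_of_pos hx),
    sub_add_cancel, rpow_one] at h

theorem Real.Gamma_add_half_div_Gamma_le_sqrt {x : ℝ} (hx : 0 < x) :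
    Gamma (x + 1 / 2) / Gamma x ≤ √x := by
  rw [div_le_iff₀ (Gamma_pos_of_pos hx), sqrt_eq_rpow]
  exact Gamma_add_le_rpow_mul_Gamma hx (by norm_num) (by norm_num)

theorem Real.div_sqrt_le_Gamma_add_half_div_Gamma {x : ℝ} (hx : 0 < x) :
    x / √(x + 1 / 2) ≤ Gamma (x + 1 / 2) / Gamma x := by
  have h := Gamma_add_le_rpow_mul_Gamma (a := 1 / 2) (by positivity : 0 < x + 1 / 2)
    (by norm_num) (by norm_num)
  rw [add_assoc, add_halves, Gamma_add_one hx.ne', ← sqrt_eq_rpow] at h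
  rw [div_le_div_iff₀ (by positivity) (Gamma_pos_of_pos hx)]
  linarith

theorem integral_rpow_sub_one {a : ℝ} (ha : 0 < a) (s : ℝ) :
    ∫ t in (0 : ℝ)..s, t ^ (a - 1) = s ^ a / a := by
  rw [integral_rpow (Or.inl (by linarith)), sub_add_cancel, zero_rpow ha.ne', sub_zero]

section IncompleteBetaIntegral

variable {s a b : ℝ}

theorem intervalIntegrable_incBeta_integrand (hs₀ : 0 ≤ s) (hs₁ : s < 1) (ha : 0 < a) :
    IntervalIntegrable (fun t ↦ t ^ (a - 1) * (1 - t) ^ (b - 1)) MeasureTheory.volume 0 s := by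
  refine (intervalIntegral.intervalIntegrable_rpow' (by linarith)).mul_continuousOn ?_
  refine ContinuousOn.rpow_const (by fun_prop) fun t ht ↦ Or.inl ?_
  rw [Set.uIcc_of_le hs₀] at ht
  linarith [ht.2]

theorem rpow_div_le_integral_incBeta (hs₀ : 0 ≤ s) (hs₁ : s < 1) (ha : 0 < a) (hb : b ≤ 1) :
    s ^ a / a ≤ ∫ t in (0 : ℝ)..s, t ^ (a - 1) * (1 - t) ^ (b - 1) := by
  rw [← integral_rpow_sub_one ha]
  refine intervalIntegral.integral_mono_on hs₀ (intervalIntegral.intervalIntegrable_rpow'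
    (by linarith)) (intervalIntegrable_incBeta_integrand hs₀ hs₁ ha) fun t ht ↦ ?_
  have : 1 ≤ (1 - t) ^ (b - 1) :=
    one_le_rpow_of_pos_of_le_one_of_nonpos (by linarith [ht.2]) (by linarith [ht.1])
      (by linarith)
  exact le_mul_of_one_le_right (rpow_nonneg ht.1 _) this

theorem integral_incBeta_le (hs₀ : 0 ≤ s) (hs₁ : s < 1) (ha : 0 < a) (hb : b ≤ 1) :
    ∫ t in (0 : ℝ)..s, t ^ (a - 1) * (1 - t) ^ (b - 1) ≤ s ^ a / a * (1 - s) ^ (b - 1) := by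
  rw [← integral_rpow_sub_one ha, ← intervalIntegral.integral_mul_const]
  refine intervalIntegral.integral_mono_on hs₀ (intervalIntegrable_incBeta_integrand hs₀ hs₁ ha)
    ((intervalIntegral.intervalIntegrable_rpow' (by linarith)).mul_const _) fun t ht ↦ ?_
  gcongr ?_ * ?_
  · exact rpow_nonneg ht.1 _
  · exact rpow_le_rpow_of_nonpos (by linarith) (by linarith [ht.2]) (by linarith)

end IncompleteBetaIntegral

theorem regIncBeta_one_half (x a : ℝ) :
    regIncBeta x a (1 / 2) = Gamma (a + 1 / 2) / Gamma a / √π *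
      ∫ t in (0 : ℝ)..x, t ^ (a - 1) * (1 - t) ^ (1 / 2 - 1 : ℝ) := by
  rw [regIncBeta, Gamma_one_half_eq, div_div]

theorem stmt15 (q : ℝ) (hq0 : 0 < q) (hq1 : q < 1/2) (p s : ℝ)
    (hp : p = 1 - q) (hs : s = 4 * p * q) (z : ℝ) (hz : 1 < z) :
    Real.sqrt (z / (z + 1/2)) * (s ^ z / Real.sqrt (π * z)) ≤ regIncBeta s z (1/2)
    ∧ regIncBeta s z (1/2) ≤ (1 / Real.sqrt (1 - s)) * (s ^ z / Real.sqrt (π * z)) := by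
  have hz₀ : 0 < z := by linarith
  have hs₀ : 0 ≤ s := by rw [hs, hp]; nlinarith
  have hs₁ : s < 1 := by rw [hs, hp]; nlinarith [sq_nonneg (1 - 2 * q)]
  have hI₁ := rpow_div_le_integral_incBeta (b := 1 / 2) hs₀ hs₁ hz₀ (by norm_num)
  have hI₂ := integral_incBeta_le (b := 1 / 2) hs₀ hs₁ hz₀ (by norm_num)
  have hsqrt : √(π * z) = √π * (z / √z) := by rw [sqrt_mul pi_pos.le, div_sqrt]
  rw [regIncBeta_one_half]
  constructor
  · calc √(z / (z + 1 / 2)) * (s ^ z / √(π * z)) = z / √(z + 1 / 2) / √π * (s ^ z / z) := by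
          rw [hsqrt, sqrt_div hz₀.le]
          field_simp
          rw [sq_sqrt hz₀.le]
      _ ≤ _ := by
          gcongr ?_ / _ * ?_
          exact div_sqrt_le_Gamma_add_half_div_Gamma hz₀
  · calc _ ≤ √z / √π * (s ^ z / z * (1 - s) ^ (1 / 2 - 1 : ℝ)) := by
          have : 0 ≤ s ^ z / z := by positivity
          gcongr
          · linarith
          · exact Gamma_add_half_div_Gamma_le_sqrt hz₀
      _ = _ := by
          rw [hsqrt, show (1 / 2 - 1 : ℝ) = -(1 / 2) by norm_num, rpow_neg (by linarith),
            ← sqrt_eq_rpow]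
          field_simp
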